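/- arXiv:2506.19226 — 5 statements merged into one kernel-verified Lean document; each statement's English description precedes it below -/
import Mathlib

section
/- Let f: Z_N → C be supported on E ⊆ Z_N, and let S ⊆ Z_N with |E|·|S| < N/2. If h: Z_N → C is a nonzero function whose discrete Fourier transform is supported in S, then the L^1 norm of h restricted to the complement of E is strictly greater than the L^1 norm of h restricted to E. -/
open Finset

/-- The discrete Fourier transform on `ZMod N`:
`f̂(ω) = N^{-1/2} ∑_x f(x) e^{-2πiωx/N}`. -/
noncomputable def dft {N : ℕ} [NeZero N] (f : ZMod N → ℂ) (ω : ZMod N) : ℂ :=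
  (Real.sqrt N : ℂ)⁻¹ *
    ∑ x : ZMod N, f x * Complex.exp (-(2 * Real.pi * Complex.I) * ((ω.val * x.val : ℕ) : ℂ) / (N : ℂ))

/-- `||u||_{L^1(A)} = ∑_{x ∈ A} |u(x)|`. -/
noncomputable def l1 {N : ℕ} [NeZero N] (A : Finset (ZMod N)) (u : ZMod N → ℂ) : ℝ :=
  ∑ x ∈ A, ‖u x‖

/-!
Since every character has modulus one, `‖𝓕 h‖_∞ ≤ ‖h‖_1`. Applying this to the inversion
formula `h = N⁻¹ 𝓕 (𝓕 h) ∘ neg`, where `𝓕 h` lives on `S`, gives `‖h‖_∞ ≤ |S| ‖h‖_1 / N`.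
Summing over `E`, the mass of `h` on `E` is at most `|E| |S| / N < 1/2` of its total mass.
-/

namespace ZMod

variable {N : ℕ} [NeZero N] {E : Type*} [NormedAddCommGroup E] [NormedSpace ℂ E]

lemma norm_dft_le_sum_norm (Φ : ZMod N → E) (k : ZMod N) : ‖𝓕 Φ k‖ ≤ ∑ j, ‖Φ j‖ := by
  rw [dft_apply]
  refine (norm_sum_le _ _).trans_eq (sum_congr rfl fun j _ => ?_)
  rw [norm_smul, stdAddChar_apply, Circle.norm_coe, one_mul]

lemma norm_le_of_dft_eq_zero_of_notMem {Φ : ZMod N → E} {S : Finset (ZMod N)}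
    (hΦ : ∀ k ∉ S, 𝓕 Φ k = 0) (j : ZMod N) :
    ‖Φ j‖ ≤ #S * (∑ i, ‖Φ i‖) / N := by
  have hinv : Φ j = (N : ℂ)⁻¹ • 𝓕 (𝓕 Φ) (-j) := by
    rw [← invDFT_apply', LinearEquiv.symm_apply_apply]
  have hsupp : ∑ k, ‖𝓕 Φ k‖ = ∑ k ∈ S, ‖𝓕 Φ k‖ :=
    (sum_subset (subset_univ S) fun k _ hk => by rw [hΦ k hk, norm_zero]).symm
  calc ‖Φ j‖ = (N : ℝ)⁻¹ * ‖𝓕 (𝓕 Φ) (-j)‖ := by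
        rw [hinv, norm_smul, norm_inv, Complex.norm_natCast]
    _ ≤ (N : ℝ)⁻¹ * ∑ k ∈ S, ‖𝓕 Φ k‖ := by
        rw [← hsupp]
        gcongr
        exact norm_dft_le_sum_norm _ _
    _ ≤ (N : ℝ)⁻¹ * ∑ _k ∈ S, ∑ i, ‖Φ i‖ := by
        gcongr with k
        exact norm_dft_le_sum_norm _ _
    _ = #S * (∑ i, ‖Φ i‖) / N := by
        rw [sum_const, nsmul_eq_mul]
        ring

lemma sum_norm_le_of_dft_eq_zero_of_notMem {Φ : ZMod N → E} {S : Finset (ZMod N)}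
    (hΦ : ∀ k ∉ S, 𝓕 Φ k = 0) (A : Finset (ZMod N)) :
    ∑ x ∈ A, ‖Φ x‖ ≤ #A * #S / N * ∑ i, ‖Φ i‖ :=
  calc ∑ x ∈ A, ‖Φ x‖ ≤ ∑ _x ∈ A, #S * (∑ i, ‖Φ i‖) / N :=
        sum_le_sum fun x _ => norm_le_of_dft_eq_zero_of_notMem hΦ x
    _ = #A * #S / N * ∑ i, ‖Φ i‖ := by
        rw [sum_const, nsmul_eq_mul]
        ring

end ZMod

lemma dft_eq_inv_sqrt_mul_zmod_dft {N : ℕ} [NeZero N] (f : ZMod N → ℂ) (ω : ZMod N) :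
    dft f ω = (Real.sqrt N : ℂ)⁻¹ * ZMod.dft f ω := by
  rw [dft, ZMod.dft_apply]
  congr 1
  refine sum_congr rfl fun x _ => ?_
  rw [smul_eq_mul, mul_comm (ZMod.stdAddChar _) (f x)]
  have hx : -(x * ω) = ((-(ω.val * x.val : ℕ) : ℤ) : ZMod N) := by
    push_cast
    rw [ZMod.natCast_val, ZMod.natCast_val, ZMod.cast_id, ZMod.cast_id]
    ring
  rw [hx, ZMod.stdAddChar_coe]
  push_cast
  ring_nf

lemma dft_eq_zero_iff {N : ℕ} [NeZero N] {f : ZMod N → ℂ} {ω : ZMod N} :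
    dft f ω = 0 ↔ ZMod.dft f ω = 0 := by
  have hN : (0 : ℝ) < N := Nat.cast_pos.mpr (NeZero.pos N)
  rw [dft_eq_inv_sqrt_mul_zmod_dft, mul_eq_zero, inv_eq_zero, Complex.ofReal_eq_zero,
    Real.sqrt_eq_zero hN.le, Nat.cast_eq_zero, or_iff_right (NeZero.ne N)]

theorem stmt0_general {N : ℕ} [NeZero N] (E S : Finset (ZMod N))
    (hES : (E.card : ℝ) * S.card < N / 2)
    (h : ZMod N → ℂ) (hh : h ≠ 0)
    (hhS : ∀ ω, dft h ω ≠ 0 → ω ∈ S) :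
    l1 E h < l1 Eᶜ h := by
  have hN : (0 : ℝ) < N := Nat.cast_pos.mpr (NeZero.pos N)
  have hFS : ∀ ω ∉ S, ZMod.dft h ω = 0 := fun ω hω =>
    dft_eq_zero_iff.mp (not_not.mp (mt (hhS ω) hω))
  set L := ∑ x, ‖h x‖
  have hLpos : 0 < L := by
    obtain ⟨x, hx⟩ := Function.ne_iff.mp hh
    exact (norm_pos_iff.mpr hx).trans_le (single_le_sum (fun i _ => norm_nonneg (h i)) (mem_univ x))
  have hsplit : l1 E h + l1 Eᶜ h = L := sum_add_sum_compl E _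
  have hsmall : l1 E h < L / 2 :=
    calc l1 E h ≤ #E * #S / N * L := ZMod.sum_norm_le_of_dft_eq_zero_of_notMem hFS E
      _ < 1 / 2 * L := by
        have : (#E * #S / N : ℝ) < 1 / 2 := by
          rw [div_lt_iff₀ hN]
          linarith
        gcongr
      _ = L / 2 := by ring
  linarith

theorem stmt0 {N : ℕ} [NeZero N] (f : ZMod N → ℂ) (E S : Finset (ZMod N))
    (hfE : ∀ x, f x ≠ 0 → x ∈ E)
    (hES : (E.card : ℝ) * S.card < N / 2)
    (h : ZMod N → ℂ) (hh : h ≠ 0)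
    (hhS : ∀ ω, dft h ω ≠ 0 → ω ∈ S) :
    l1 E h < l1 Eᶜ h :=
  stmt0_general E S hES h hh hhS
end

section
/- (Donoho–Stark exact recovery) Let f: Z_N → C be supported on E ⊆ Z_N and let S ⊆ Z_N with |E|·|S| < N/2. If g: Z_N → C satisfies ĝ(m) = f̂(m) for all m ∉ S and ||g||_{L^1(Z_N)} ≤ ||f||_{L^1(Z_N)}, then g = f. -/
open Finset
open scoped ZMod

/-!
Put `h = g - f`. Its Fourier transform vanishes off `S`, so Fourier inversion bounds every value
of `h` by `|S| / N · ‖h‖₁`, and hence `∑_{x ∈ E} |h x| ≤ |E| |S| / N · ‖h‖₁ < ‖h‖₁ / 2`. On the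
other hand, since `f` vanishes off `E`, the inequality `‖f + h‖₁ ≤ ‖f‖₁` forces at least half of
the mass of `h` to lie on `E`. Both together leave only `h = 0`.
-/

lemma dft_eq_inv_sqrt_mul_dft {N : ℕ} [NeZero N] (u : ZMod N → ℂ) (ω : ZMod N) :
    dft u ω = (Real.sqrt N : ℂ)⁻¹ * 𝓕 u ω := by
  rw [dft, ZMod.dft_apply]
  congr 1
  refine sum_congr rfl fun x _ => ?_
  rw [smul_eq_mul, mul_comm]
  congr 1
  have : (-(x * ω) : ZMod N) = ((-(x.val * ω.val : ℤ) : ℤ) : ZMod N) := by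
    simp [ZMod.natCast_val]
  rw [this, ZMod.stdAddChar_coe]
  push_cast
  ring_nf

namespace ZMod

variable {N : ℕ} [NeZero N] {V : Type*} [NormedAddCommGroup V] [NormedSpace ℂ V]

lemma norm_dft_le_sum_norm_s2 (h : ZMod N → V) (k : ZMod N) : ‖𝓕 h k‖ ≤ ∑ x, ‖h x‖ :=
  (norm_sum_le _ _).trans_eq <| sum_congr rfl fun x _ => by
    rw [norm_smul, stdAddChar_apply, Circle.norm_coe, one_mul]

lemma norm_le_card_div_mul_sum_norm_of_dft_eq_zero {h : ZMod N → V} {S : Finset (ZMod N)}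
    (hS : ∀ k ∉ S, 𝓕 h k = 0) (x : ZMod N) :
    ‖h x‖ ≤ #S / N * ∑ y, ‖h y‖ := by
  have hinv : h x = (N : ℂ)⁻¹ • ∑ k ∈ S, stdAddChar (k * x) • 𝓕 h k := by
    rw [sum_subset (subset_univ S) fun k _ hk => by rw [hS k hk, smul_zero], ← invDFT_apply,
      LinearEquiv.symm_apply_apply]
  have hsum : ‖∑ k ∈ S, stdAddChar (k * x) • 𝓕 h k‖ ≤ #S * ∑ y, ‖h y‖ := by
    refine (norm_sum_le _ _).trans ?_
    rw [← nsmul_eq_mul, ← sum_const]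
    refine sum_le_sum fun k _ => ?_
    rw [norm_smul, stdAddChar_apply, Circle.norm_coe, one_mul]
    exact norm_dft_le_sum_norm_s2 h k
  rw [hinv, norm_smul, norm_inv, Complex.norm_natCast, div_mul_eq_mul_div, inv_mul_eq_div]
  gcongr

end ZMod

section L1Minimization

variable {α V : Type*} [Fintype α] [DecidableEq α] [NormedAddCommGroup V]

lemma sum_compl_norm_le_sum_norm_of_sum_norm_add_le {f h : α → V} {E : Finset α}
    (hfE : ∀ x ∉ E, f x = 0) (hmin : ∑ x, ‖f x + h x‖ ≤ ∑ x, ‖f x‖) :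
    ∑ x ∈ Eᶜ, ‖h x‖ ≤ ∑ x ∈ E, ‖h x‖ := by
  have hcompl : ∑ x ∈ Eᶜ, ‖f x + h x‖ = ∑ x ∈ Eᶜ, ‖h x‖ :=
    sum_congr rfl fun x hx => by rw [hfE x (mem_compl.mp hx), zero_add]
  have hfcompl : ∑ x ∈ Eᶜ, ‖f x‖ = 0 :=
    sum_eq_zero fun x hx => by rw [hfE x (mem_compl.mp hx), norm_zero]
  rw [← sum_add_sum_compl E, ← sum_add_sum_compl E (fun x => ‖f x‖), hcompl, hfcompl,
    add_zero] at hmin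
  have hE : ∑ x ∈ E, ‖f x‖ ≤ ∑ x ∈ E, ‖f x + h x‖ + ∑ x ∈ E, ‖h x‖ := by
    rw [← sum_add_distrib]
    exact sum_le_sum fun x _ => (norm_le_norm_add_norm_sub (f x + h x) (f x)).trans_eq <| by
      rw [add_sub_cancel_left]
  linarith

lemma eq_zero_of_sum_compl_norm_le_of_norm_le {h : α → V} {E : Finset α} {c : ℝ}
    (hmass : ∑ x ∈ Eᶜ, ‖h x‖ ≤ ∑ x ∈ E, ‖h x‖) (hsup : ∀ x, ‖h x‖ ≤ c * ∑ y, ‖h y‖)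
    (hc : 2 * #E * c < 1) : h = 0 := by
  set T := ∑ y, ‖h y‖
  have hEsum : ∑ x ∈ E, ‖h x‖ ≤ #E * (c * T) := by
    rw [← nsmul_eq_mul, ← sum_const]
    exact sum_le_sum fun x _ => hsup x
  have hT : T = 0 := by
    have : T ≤ 2 * #E * c * T := by
      linarith [sum_add_sum_compl E fun y => ‖h y‖]
    nlinarith [show 0 ≤ T from sum_nonneg fun y _ => norm_nonneg (h y)]
  funext x
  exact norm_le_zero_iff.mp <| by simpa [hT] using hsup x

end L1Minimization

/-- Donoho–Stark exact recovery. -/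
theorem stmt2 {N : ℕ} [NeZero N] (f g : ZMod N → ℂ) (E S : Finset (ZMod N))
    (hfE : ∀ x, f x ≠ 0 → x ∈ E)
    (hES : (E.card : ℝ) * S.card < N / 2)
    (hagree : ∀ m ∉ S, dft g m = dft f m)
    (hmin : l1 univ g ≤ l1 univ f) :
    g = f := by
  have hN : (0 : ℝ) < N := Nat.cast_pos.mpr (NeZero.pos N)
  have hspec : ∀ m ∉ S, 𝓕 (g - f) m = 0 := fun m hm => by
    have := hagree m hm
    rw [dft_eq_inv_sqrt_mul_dft, dft_eq_inv_sqrt_mul_dft, mul_right_inj' (by simpa using hN.ne')]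
      at this
    rw [map_sub, Pi.sub_apply, this, sub_self]
  have hmass := sum_compl_norm_le_sum_norm_of_sum_norm_add_le (h := g - f)
    (fun x hx => not_not.mp (mt (hfE x) hx)) (by simpa [l1] using hmin)
  refine sub_eq_zero.mp <| eq_zero_of_sum_compl_norm_le_of_norm_le hmass
    (ZMod.norm_le_card_div_mul_sum_norm_of_dft_eq_zero hspec) ?_
  rw [mul_div_assoc', div_lt_one hN]
  linarith
end

section
/- Under the hypotheses of the quantitative Logan theorem (f̂ L^1-concentrated on S with norm ≤ ε, δ = |M||S|/N < 1/2, g agreeing with f off M and ||ĝ||_1 minimal), the average error on the missing set satisfies (1/|M|) Σ_{x ∈ M} |f(x) − g(x)| ≤ (2ε/(1−2δ))·(1/N) Σ_{x ∈ Z_N} |f(x)|. -/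
open Finset

/-! The error `h = f - g` is supported on `M`, so each Fourier coefficient of `h` is at most
`N^{-1/2} ‖h‖₁`, giving `‖ĥ‖_{L¹(S)} ≤ |S| N^{-1/2} ‖h‖₁`; conversely Fourier inversion bounds
`‖h‖₁ ≤ |M| N^{-1/2} ‖ĥ‖₁`. Minimality of `‖ĝ‖₁` forces the mass of `ĥ` off `S` to be at most its
mass on `S` plus twice the (small) mass of `f̂` off `S`. Chaining these gives
`‖h‖₁ ≤ 2δ ‖h‖₁ + 2ε |M| N⁻¹ ‖f‖₁`, and `δ < 1/2` lets the first term be absorbed. -/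

theorem sum_norm_sub_le_of_sum_norm_le {ι E : Type*} [Fintype ι] [DecidableEq ι]
    [SeminormedAddCommGroup E] (u v : ι → E) (S : Finset ι)
    (hvu : ∑ i, ‖v i‖ ≤ ∑ i, ‖u i‖) :
    ∑ i, ‖u i - v i‖ ≤ 2 * (∑ i ∈ S, ‖u i - v i‖ + ∑ i ∈ Sᶜ, ‖u i‖) := by
  have hSc : ∑ i ∈ Sᶜ, ‖u i - v i‖ ≤ ∑ i ∈ Sᶜ, ‖u i‖ + ∑ i ∈ Sᶜ, ‖v i‖ := by
    rw [← sum_add_distrib]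
    exact sum_le_sum fun i _ => norm_sub_le _ _
  have hS : ∑ i ∈ S, ‖u i‖ ≤ ∑ i ∈ S, ‖u i - v i‖ + ∑ i ∈ S, ‖v i‖ := by
    rw [← sum_add_distrib]
    exact sum_le_sum fun i _ => norm_le_norm_sub_add _ _
  have hu := sum_add_sum_compl S fun i => ‖u i‖
  have hv := sum_add_sum_compl S fun i => ‖v i‖
  have huv := sum_add_sum_compl S fun i => ‖u i - v i‖
  linarith

theorem inv_mul_le_div_of_le_two_mul_add {A δ m c : ℝ} (hm : 0 ≤ m) (hc : 0 ≤ c)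
    (hδ : δ < 1 / 2) (h : A ≤ 2 * δ * A + m * c) : m⁻¹ * A ≤ c / (1 - 2 * δ) := by
  have hgap : 0 < 1 - 2 * δ := by linarith
  refine inv_mul_le_of_le_mul₀ hm (div_nonneg hc hgap.le) ?_
  rw [mul_div_assoc', le_div_iff₀ hgap]
  linarith

theorem norm_inv_sqrt_smul (r : ℝ) (z : ℂ) :
    ‖(Real.sqrt r : ℂ)⁻¹ • z‖ = (Real.sqrt r)⁻¹ * ‖z‖ := by
  rw [norm_smul, norm_inv, Complex.norm_real, Real.norm_of_nonneg (Real.sqrt_nonneg _)]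

section DFT

variable {N : ℕ} [NeZero N]

theorem dft_eq_inv_sqrt_smul_zmodDFT (f : ZMod N → ℂ) :
    dft f = (Real.sqrt N : ℂ)⁻¹ • ZMod.dft f := by
  ext ω
  rw [dft, Pi.smul_apply, smul_eq_mul, ZMod.dft_apply]
  congr 1
  refine sum_congr rfl fun x _ => ?_
  have hphase : -(x * ω) = ((-(ω.val * x.val : ℤ) : ℤ) : ZMod N) := by simp [mul_comm]
  rw [smul_eq_mul, mul_comm, hphase, ZMod.stdAddChar_coe]
  push_cast
  ring_nf

theorem dft_sub (f g : ZMod N → ℂ) : dft (f - g) = dft f - dft g := by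
  simp only [dft_eq_inv_sqrt_smul_zmodDFT, map_sub, smul_sub]

theorem norm_dft_le (u : ZMod N → ℂ) (ω : ZMod N) :
    ‖dft u ω‖ ≤ (Real.sqrt N)⁻¹ * ∑ x, ‖u x‖ := by
  rw [dft_eq_inv_sqrt_smul_zmodDFT, Pi.smul_apply, norm_inv_sqrt_smul, ZMod.dft_apply]
  gcongr
  refine (norm_sum_le _ _).trans_eq (sum_congr rfl fun x _ => ?_)
  rw [norm_smul, ZMod.stdAddChar_apply, Circle.norm_coe, one_mul]

theorem norm_le_inv_sqrt_mul_l1_dft (u : ZMod N → ℂ) (x : ZMod N) :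
    ‖u x‖ ≤ (Real.sqrt N)⁻¹ * l1 univ (dft u) := by
  have hinv : u x = (N : ℂ)⁻¹ • ∑ ω, ZMod.stdAddChar (ω * x) • ZMod.dft u ω := by
    conv_lhs => rw [← (ZMod.dft (E := ℂ)).symm_apply_apply u]
    exact ZMod.invDFT_apply _ _
  have hN : ((N : ℝ))⁻¹ = (Real.sqrt N)⁻¹ * (Real.sqrt N)⁻¹ := by
    rw [← mul_inv, Real.mul_self_sqrt (Nat.cast_nonneg N)]
  rw [hinv, norm_smul, norm_inv, Complex.norm_natCast, hN, mul_assoc, l1,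
    dft_eq_inv_sqrt_smul_zmodDFT]
  simp only [Pi.smul_apply, norm_inv_sqrt_smul, ← mul_sum]
  gcongr
  refine (norm_sum_le _ _).trans_eq (sum_congr rfl fun ω _ => ?_)
  rw [norm_smul, ZMod.stdAddChar_apply, Circle.norm_coe, one_mul]

theorem l1_dft_le_card_mul (A : Finset (ZMod N)) (u : ZMod N → ℂ) :
    l1 A (dft u) ≤ A.card * (Real.sqrt N)⁻¹ * ∑ x, ‖u x‖ := by
  calc l1 A (dft u) ≤ ∑ _ω ∈ A, (Real.sqrt N)⁻¹ * ∑ x, ‖u x‖ :=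
        sum_le_sum fun ω _ => norm_dft_le u ω
    _ = A.card * (Real.sqrt N)⁻¹ * ∑ x, ‖u x‖ := by rw [sum_const, nsmul_eq_mul, mul_assoc]

theorem l1_dft_le_sqrt_mul (u : ZMod N → ℂ) :
    l1 univ (dft u) ≤ Real.sqrt N * ∑ x, ‖u x‖ := by
  have hN : ((univ : Finset (ZMod N)).card : ℝ) * (Real.sqrt N)⁻¹ = Real.sqrt N := by
    rw [card_univ, ZMod.card, ← div_eq_mul_inv, Real.div_sqrt]
  simpa only [hN] using l1_dft_le_card_mul univ u

theorem sum_norm_le_card_mul_l1_dft (M : Finset (ZMod N)) (u : ZMod N → ℂ) :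
    ∑ x ∈ M, ‖u x‖ ≤ M.card * (Real.sqrt N)⁻¹ * l1 univ (dft u) := by
  calc ∑ x ∈ M, ‖u x‖ ≤ ∑ _x ∈ M, (Real.sqrt N)⁻¹ * l1 univ (dft u) :=
        sum_le_sum fun x _ => norm_le_inv_sqrt_mul_l1_dft u x
    _ = M.card * (Real.sqrt N)⁻¹ * l1 univ (dft u) := by rw [sum_const, nsmul_eq_mul, mul_assoc]

end DFT

theorem stmt5 {N : ℕ} [NeZero N] (f g : ZMod N → ℂ) (M S : Finset (ZMod N))
    (ε : ℝ) (hε : 0 ≤ ε)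
    (hconc : l1 Sᶜ (dft f) ≤ ε / N * l1 univ (dft f))
    (hδ : (M.card : ℝ) * S.card / N < 1 / 2)
    (hagree : ∀ x ∉ M, g x = f x)
    (hmin : l1 univ (dft g) ≤ l1 univ (dft f)) :
    (1 / (M.card : ℝ)) * ∑ x ∈ M, ‖f x - g x‖ ≤
      2 * ε / (1 - 2 * ((M.card : ℝ) * S.card / N)) * (1 / N) *
        ∑ x : ZMod N, ‖f x‖ := by
  set A := ∑ x ∈ M, ‖f x - g x‖
  set δ := (M.card : ℝ) * S.card / N
  have hN : (0 : ℝ) < N := Nat.cast_pos.mpr (NeZero.pos N)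
  have hsupp : ∑ x, ‖(f - g) x‖ = A :=
    (sum_subset (subset_univ M) fun x _ hx => by simp [hagree x hx]).symm
  have hinv : A ≤ M.card * (Real.sqrt N)⁻¹ * l1 univ (dft (f - g)) :=
    sum_norm_le_card_mul_l1_dft M (f - g)
  have hmass : l1 univ (dft (f - g)) ≤ 2 * (l1 S (dft (f - g)) + l1 Sᶜ (dft f)) := by
    rw [dft_sub]
    exact sum_norm_sub_le_of_sum_norm_le _ _ S hmin
  have hon : l1 S (dft (f - g)) ≤ S.card * (Real.sqrt N)⁻¹ * A :=
    hsupp ▸ l1_dft_le_card_mul S (f - g)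
  have hoff : l1 Sᶜ (dft f) ≤ ε / N * (Real.sqrt N * ∑ x, ‖f x‖) :=
    hconc.trans (by gcongr; exact l1_dft_le_sqrt_mul f)
  have hself : A ≤ 2 * δ * A + M.card * (2 * ε / N * ∑ x, ‖f x‖) :=
    calc A ≤ M.card * (Real.sqrt N)⁻¹ *
          (2 * (S.card * (Real.sqrt N)⁻¹ * A + ε / N * (Real.sqrt N * ∑ x, ‖f x‖))) :=
          hinv.trans <| mul_le_mul_of_nonneg_left
            (hmass.trans <| mul_le_mul_of_nonneg_left (add_le_add hon hoff) zero_le_two)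
            (by positivity)
      _ = 2 * δ * A + M.card * (2 * ε / N * ∑ x, ‖f x‖) := by
          simp only [δ]
          field_simp
          rw [Real.sq_sqrt hN.le]
          ring
  calc 1 / (M.card : ℝ) * A = (M.card : ℝ)⁻¹ * A := by rw [one_div]
    _ ≤ 2 * ε / N * (∑ x, ‖f x‖) / (1 - 2 * δ) :=
      inv_mul_le_div_of_le_two_mul_add (Nat.cast_nonneg _) (by positivity) hδ hself
    _ = 2 * ε / (1 - 2 * δ) * (1 / N) * ∑ x, ‖f x‖ := by ring
end

section
/- (Hoeffding for random subsets via binomial conditioning) Let f: Z_N → C and let M be a random subset of Z_N where each element is included independently with probability p ∈ (0,1). Then for every t > 0, Pr( | (1/|M|) Σ_{x∈M} |f(x)| − (1/N) Σ_{x∈Z_N} |f(x)| | ≥ t ) ≤ 2·(1 − p + p·exp(−2t²/||f||_∞²))^N, with the convention that the event is measured only on {|M| ≥ 1}. -/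
/-!
Chernoff's method on the random subset itself. Write `μ` for the mean of `|f|` and
`b x = |f x| - μ`. For `λ ≥ 0` the indicator of `∑_{x ∈ M} b x ≥ |M| t` is at most
`∏_{x ∈ M} e^{λ (b x - t)}`, whose expectation over the random subset factorises as
`∏_x (1 - p + p e^{λ (b x - t)})`. By AM-GM this is at most `(1 - p + p A)^N`, where `A` is the
average of `e^{λ (b x - t)}` over `x`, and Hoeffding's lemma for a uniformly random `x` gives
`A ≤ e^{-λ t + λ² ‖f‖_∞² / 8}`; the choice `λ = 4 t / ‖f‖_∞²` turns this into
`e^{-2 t² / ‖f‖_∞²}`. The lower tail is the same bound for `-b`.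
-/

open Finset

open MeasureTheory ProbabilityTheory Real

theorem Finset.sum_pow_card_mul_prod_eq_prod_add {ι R : Type*} [Fintype ι] [CommSemiring R]
    (p q : R) (g : ι → R) :
    ∑ M : Finset ι, p ^ #M * q ^ (Fintype.card ι - #M) * ∏ i ∈ M, g i =
      ∏ i, (p * g i + q) := by
  classical
  rw [Fintype.prod_add]
  refine sum_congr rfl fun M _ => ?_
  rw [prod_const, card_compl, prod_mul_distrib, prod_const]
  ring

theorem prod_le_sum_div_card_pow {ι : Type*} [Fintype ι] {v : ι → ℝ} (hv : ∀ i, 0 ≤ v i) :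
    ∏ i, v i ≤ ((∑ i, v i) / Fintype.card ι) ^ Fintype.card ι := by
  rcases isEmpty_or_nonempty ι with hι | hι
  · simp
  have hn : (0 : ℝ) < Fintype.card ι := by exact_mod_cast Fintype.card_pos
  have h := geom_mean_le_arith_mean univ (fun _ => (1 : ℝ)) v (fun _ _ => zero_le_one)
    (by simpa using hn) (fun i _ => hv i)
  simp only [rpow_one, one_mul, sum_const, card_univ, nsmul_eq_mul, mul_one] at h
  calc ∏ i, v i = ((∏ i, v i) ^ (Fintype.card ι : ℝ)⁻¹) ^ Fintype.card ι := by
        rw [← rpow_natCast, ← rpow_mul (prod_nonneg fun i _ => hv i), inv_mul_cancel₀ hn.ne',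
          rpow_one]
    _ ≤ _ := pow_le_pow_left₀ (rpow_nonneg (prod_nonneg fun i _ => hv i) _) h _

/-- Hoeffding's lemma for a uniformly random index. -/
theorem sum_exp_mul_le_card_mul_exp {ι : Type*} [Fintype ι] {b : ι → ℝ} {lo hi : ℝ}
    (hsum : ∑ i, b i = 0) (hb : ∀ i, b i ∈ Set.Icc lo hi) (lam : ℝ) :
    ∑ i, exp (lam * b i) ≤ Fintype.card ι * exp ((hi - lo) ^ 2 * lam ^ 2 / 8) := by
  rcases isEmpty_or_nonempty ι with hι | hι
  · simp
  let _ : MeasurableSpace ι := ⊤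
  have : DiscreteMeasurableSpace ι := ⟨fun _ => trivial⟩
  set μ := (PMF.uniformOfFintype ι).toMeasure
  have hn : (Fintype.card ι : ℝ) ≠ 0 := by positivity
  have hmean : μ[b] = 0 := by
    simp [μ, PMF.integral_eq_sum, ← mul_sum, hsum]
  have h := (hasSubgaussianMGF_of_mem_Icc_of_integral_eq_zero (μ := μ)
    (measurable_of_countable b).aemeasurable (ae_of_all _ hb) hmean).mgf_le lam
  simp only [mgf, μ, PMF.integral_eq_sum, PMF.uniformOfFintype_apply, smul_eq_mul] at h
  rw [← mul_sum, ENNReal.toReal_inv, ENNReal.toReal_natCast, inv_mul_le_iff₀ (by positivity)] at h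
  refine h.trans_eq ?_
  congr 2
  simp only [NNReal.coe_pow, NNReal.coe_div, coe_nnnorm, norm_eq_abs, NNReal.coe_ofNat, div_pow,
    sq_abs]
  ring

section BinomialSubsets

variable {ι : Type*} [Fintype ι]

/-- The probability of `E` for a random subset of `ι` containing each element independently
with probability `p`. -/
noncomputable def binomialSubsetProb (p : ℝ) (E : Finset ι → Prop) [DecidablePred E] : ℝ :=
  ∑ M : Finset ι, if E M then p ^ #M * (1 - p) ^ (Fintype.card ι - #M) else 0

variable {p : ℝ}

theorem binomialSubsetProb_le_add (hp0 : 0 ≤ p) (hp1 : p ≤ 1) {E F G : Finset ι → Prop}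
    [DecidablePred E] [DecidablePred F] [DecidablePred G] (h : ∀ M, E M → F M ∨ G M) :
    binomialSubsetProb p E ≤ binomialSubsetProb p F + binomialSubsetProb p G := by
  rw [binomialSubsetProb, binomialSubsetProb, binomialSubsetProb, ← sum_add_distrib]
  refine sum_le_sum fun M _ => ?_
  have hw : 0 ≤ p ^ #M * (1 - p) ^ (Fintype.card ι - #M) := by
    have := sub_nonneg.2 hp1; positivity
  by_cases hE : E M
  · rw [if_pos hE]
    rcases h M hE with hF | hG
    · exact le_add_of_le_of_nonneg (if_pos hF).ge (ite_nonneg hw le_rfl)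
    · exact le_add_of_nonneg_of_le (ite_nonneg hw le_rfl) (if_pos hG).ge
  · rw [if_neg hE]
    exact add_nonneg (ite_nonneg hw le_rfl) (ite_nonneg hw le_rfl)

theorem binomialSubsetProb_le_prod (hp0 : 0 ≤ p) (hp1 : p ≤ 1) {E : Finset ι → Prop}
    [DecidablePred E] {g : ι → ℝ} (hg : ∀ i, 0 ≤ g i) (hE : ∀ M, E M → 1 ≤ ∏ i ∈ M, g i) :
    binomialSubsetProb p E ≤ ∏ i, (p * g i + (1 - p)) := by
  rw [← sum_pow_card_mul_prod_eq_prod_add]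
  refine sum_le_sum fun M _ => ?_
  have hw : 0 ≤ p ^ #M * (1 - p) ^ (Fintype.card ι - #M) := by
    have := sub_nonneg.2 hp1; positivity
  split_ifs with hM
  · exact le_mul_of_one_le_right hw (hE M hM)
  · exact mul_nonneg hw (prod_nonneg fun i _ => hg i)

variable {b : ι → ℝ} {a w t : ℝ}

theorem binomialSubsetProb_card_mul_le_sum_le_of_nonneg (hsum : ∑ i, b i = 0)
    (hb : ∀ i, b i ∈ Set.Icc a (a + w)) (hp0 : 0 ≤ p) (hp1 : p ≤ 1) {lam : ℝ} (hlam : 0 ≤ lam) :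
    binomialSubsetProb p (fun M => #M * t ≤ ∑ i ∈ M, b i) ≤
      (1 - p + p * exp (-(lam * t) + w ^ 2 * lam ^ 2 / 8)) ^ Fintype.card ι := by
  set n := Fintype.card ι
  set q := exp (-(lam * t) + w ^ 2 * lam ^ 2 / 8)
  set G : ι → ℝ := fun i => exp (lam * (b i - t))
  have hG : ∑ i, G i ≤ n * q := by
    have hfactor (i : ι) : G i = exp (-(lam * t)) * exp (lam * b i) := by
      simp only [G, ← exp_add]; ring_nf
    rw [sum_congr rfl fun i _ => hfactor i, ← mul_sum]
    calc exp (-(lam * t)) * ∑ i, exp (lam * b i)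
        ≤ exp (-(lam * t)) * (n * exp ((a + w - a) ^ 2 * lam ^ 2 / 8)) :=
          mul_le_mul_of_nonneg_left (sum_exp_mul_le_card_mul_exp hsum hb lam) (exp_pos _).le
      _ = n * q := by rw [add_sub_cancel_left, mul_left_comm, ← exp_add]
  have hchernoff (M : Finset ι) (hM : #M * t ≤ ∑ i ∈ M, b i) : 1 ≤ ∏ i ∈ M, G i := by
    rw [← exp_sum, ← mul_sum, sum_sub_distrib, sum_const, nsmul_eq_mul]
    exact one_le_exp (mul_nonneg hlam (sub_nonneg.2 hM))
  have h1p : 0 ≤ 1 - p := sub_nonneg.2 hp1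
  calc _ ≤ ∏ i, (p * G i + (1 - p)) :=
        binomialSubsetProb_le_prod hp0 hp1 (fun i => (exp_pos _).le) hchernoff
    _ ≤ ((∑ i, (p * G i + (1 - p))) / n) ^ n := prod_le_sum_div_card_pow fun i => by positivity
    _ ≤ (1 - p + p * q) ^ n := by
        refine pow_le_pow_left₀ (by positivity) (div_le_of_le_mul₀ (by positivity)
          (by positivity) ?_) n
        rw [sum_add_distrib, ← mul_sum, sum_const, card_univ, nsmul_eq_mul]
        nlinarith [mul_le_mul_of_nonneg_left hG hp0]

theorem binomialSubsetProb_card_mul_le_sum_le (hsum : ∑ i, b i = 0)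
    (hb : ∀ i, b i ∈ Set.Icc a (a + w)) (hp0 : 0 ≤ p) (hp1 : p ≤ 1) (ht : 0 ≤ t) :
    binomialSubsetProb p (fun M => #M * t ≤ ∑ i ∈ M, b i) ≤
      (1 - p + p * exp (-(2 * t ^ 2) / w ^ 2)) ^ Fintype.card ι := by
  have hopt : -(4 * t / w ^ 2 * t) + w ^ 2 * (4 * t / w ^ 2) ^ 2 / 8 = -(2 * t ^ 2) / w ^ 2 := by
    rcases eq_or_ne w 0 with rfl | hw
    · simp
    · field_simp; ring
  rw [← hopt]
  exact binomialSubsetProb_card_mul_le_sum_le_of_nonneg hsum hb hp0 hp1 (by positivity)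

end BinomialSubsets

theorem card_mul_le_sum_sub_or_of_le_abs {ι : Type*} {M : Finset ι} {v : ι → ℝ} {μ t : ℝ}
    (hM : 0 < #M) (h : t ≤ |(1 / (#M : ℝ)) * ∑ i ∈ M, v i - μ|) :
    #M * t ≤ ∑ i ∈ M, (v i - μ) ∨ #M * t ≤ ∑ i ∈ M, (μ - v i) := by
  have hM' : (0 : ℝ) < #M := by exact_mod_cast hM
  have hsum : ∑ i ∈ M, (v i - μ) = #M * ((1 / (#M : ℝ)) * ∑ i ∈ M, v i - μ) := by
    rw [sum_sub_distrib, sum_const, nsmul_eq_mul]; field_simp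
  have hsum' : ∑ i ∈ M, (μ - v i) = #M * -((1 / (#M : ℝ)) * ∑ i ∈ M, v i - μ) := by
    rw [mul_neg, ← hsum, ← sum_neg_distrib]; simp
  rw [hsum, hsum']
  exact (le_abs.1 h).imp (mul_le_mul_of_nonneg_left · hM'.le) (mul_le_mul_of_nonneg_left · hM'.le)

/-- Hoeffding for random subsets via binomial conditioning: each element of `ZMod N`
is included in `M` independently with probability `p`, so the probability weight of a
given subset `M` is `p^|M| (1-p)^(N-|M|)`; the event is measured only on `{|M| ≥ 1}`. -/
theorem stmt14 {N : ℕ} [NeZero N] (f : ZMod N → ℂ) (p t : ℝ)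
    (hp : p ∈ Set.Ioo (0 : ℝ) 1) (ht : 0 < t) :
    ∑ M : Finset (ZMod N),
      (if 1 ≤ M.card ∧ t ≤ |(1 / (M.card : ℝ)) * ∑ x ∈ M, ‖f x‖ -
          (1 / (N : ℝ)) * ∑ x : ZMod N, ‖f x‖|
        then p ^ M.card * (1 - p) ^ (N - M.card) else 0) ≤
      2 * (1 - p + p * Real.exp (-(2 * t ^ 2) / (⨆ x, ‖f x‖) ^ 2)) ^ N := by
  obtain ⟨hp0, hp1⟩ := hp
  set c := ⨆ x, ‖f x‖
  set μ := (1 / (N : ℝ)) * ∑ x : ZMod N, ‖f x‖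
  have hfc (x : ZMod N) : ‖f x‖ ≤ c :=
    le_ciSup (f := fun x => ‖f x‖) (Set.finite_range _).bddAbove x
  have hcentered : ∑ x : ZMod N, (‖f x‖ - μ) = 0 := by
    rw [sum_sub_distrib, sum_const, card_univ, ZMod.card, nsmul_eq_mul, ← mul_assoc,
      mul_one_div_cancel (NeZero.ne (N : ℝ)), one_mul, sub_self]
  have hcentered' : ∑ x : ZMod N, (μ - ‖f x‖) = 0 := by
    rw [← neg_eq_zero, ← sum_neg_distrib]
    simpa only [neg_sub] using hcentered
  have hupper := binomialSubsetProb_card_mul_le_sum_le (p := p) (t := t) (a := -μ) (w := c)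
    hcentered (fun x => ⟨by linarith [norm_nonneg (f x)], by linarith [hfc x]⟩) hp0.le hp1.le ht.le
  have hlower := binomialSubsetProb_card_mul_le_sum_le (p := p) (t := t) (a := μ - c) (w := c)
    hcentered' (fun x => ⟨by linarith [hfc x], by linarith [norm_nonneg (f x)]⟩) hp0.le hp1.le ht.le
  rw [ZMod.card] at hupper hlower
  calc _ = binomialSubsetProb p (fun M : Finset (ZMod N) =>
          1 ≤ #M ∧ t ≤ |(1 / (#M : ℝ)) * ∑ x ∈ M, ‖f x‖ - μ|) := by
        simp only [binomialSubsetProb, ZMod.card]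
    _ ≤ _ := binomialSubsetProb_le_add hp0.le hp1.le fun M hM =>
        card_mul_le_sum_sub_or_of_le_abs hM.1 hM.2
    _ ≤ _ := add_le_add hupper hlower
    _ = _ := (two_mul _).symm
end

section
/- If h: Z_N → C is supported in M ⊆ Z_N and S ⊆ Z_N satisfies δ := |M||S|/N, then ||ĥ||_{L^1(S^c)} − ||ĥ||_{L^1(S)} ≥ (1 − 2δ)·||ĥ||_{L^1(Z_N)}. -/
open Finset

/-!
Up to the normalisation `N^{-1/2}`, `ĥ` is Mathlib's `𝓕 h`. Each value of `𝓕 h` is at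
most `∑_{x ∈ M} |h x|`, and by Fourier inversion each `|h x|` is at most `N⁻¹ ‖𝓕 h‖₁`;
hence `|ĥ ω| ≤ (|M|/N) ‖ĥ‖₁` for every `ω`. The mass of `ĥ` on `S` is then at most
`δ ‖ĥ‖₁`, and `‖ĥ‖_{L¹(Sᶜ)} - ‖ĥ‖_{L¹(S)} = ‖ĥ‖₁ - 2 ‖ĥ‖_{L¹(S)}`.
-/

namespace ZMod

variable {N : ℕ} [NeZero N] {E : Type*} [NormedAddCommGroup E] [NormedSpace ℂ E]

lemma norm_le_inv_mul_sum_norm_dft (Φ : ZMod N → E) (x : ZMod N) :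
    ‖Φ x‖ ≤ (N : ℝ)⁻¹ * ∑ ω, ‖𝓕 Φ ω‖ := by
  conv_lhs =>
    rw [← dft.symm_apply_apply Φ, invDFT_apply', norm_smul, norm_inv, Complex.norm_natCast]
  gcongr
  exact norm_dft_le_sum_norm _ _

lemma norm_dft_le_of_support_subset {Φ : ZMod N → E} {M : Finset (ZMod N)}
    (hsupp : ∀ x, Φ x ≠ 0 → x ∈ M) (k : ZMod N) :
    ‖𝓕 Φ k‖ ≤ M.card / N * ∑ ω, ‖𝓕 Φ ω‖ := by
  have hsum : ∑ j, ‖Φ j‖ = ∑ j ∈ M, ‖Φ j‖ :=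
    (sum_subset (subset_univ M) fun x _ hx => by
      rw [norm_eq_zero]; exact not_imp_comm.mp (hsupp x) hx).symm
  calc ‖𝓕 Φ k‖ ≤ ∑ j ∈ M, ‖Φ j‖ := hsum ▸ norm_dft_le_sum_norm Φ k
    _ ≤ ∑ _j ∈ M, (N : ℝ)⁻¹ * ∑ ω, ‖𝓕 Φ ω‖ :=
        sum_le_sum fun j _ => norm_le_inv_mul_sum_norm_dft Φ j
    _ = M.card / N * ∑ ω, ‖𝓕 Φ ω‖ := by rw [sum_const, nsmul_eq_mul]; ring

end ZMod

open scoped ZMod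

lemma dft_eq_inv_sqrt_smul_zmodDft {N : ℕ} [NeZero N] (f : ZMod N → ℂ) :
    dft f = ((Real.sqrt N : ℂ)⁻¹) • 𝓕 f := by
  ext ω
  rw [dft, Pi.smul_apply, ZMod.dft_apply, smul_eq_mul]
  congr 1
  refine sum_congr rfl fun x _ => ?_
  rw [smul_eq_mul, mul_comm]
  congr 1
  -- `e^{-2πi ω x / N}` depends only on `ω x mod N`
  have hx : (-(x * ω) : ZMod N) = ((-(ω.val * x.val : ℤ) : ℤ) : ZMod N) := by
    push_cast
    rw [ZMod.natCast_val, ZMod.natCast_val, ZMod.cast_id, ZMod.cast_id]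
    ring
  rw [hx, ZMod.stdAddChar_coe]
  congr 1
  push_cast
  ring

lemma norm_dft_le_card_div_mul_l1 {N : ℕ} [NeZero N] {h : ZMod N → ℂ} {M : Finset (ZMod N)}
    (hsupp : ∀ x, h x ≠ 0 → x ∈ M) (m : ZMod N) :
    ‖dft h m‖ ≤ M.card / N * l1 univ (dft h) := by
  have hs : (0 : ℝ) ≤ (Real.sqrt N)⁻¹ := by positivity
  simp only [l1, dft_eq_inv_sqrt_smul_zmodDft, Pi.smul_apply, norm_smul, norm_inv,
    Complex.norm_real, Real.norm_of_nonneg (Real.sqrt_nonneg _), ← mul_sum]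
  calc (Real.sqrt N)⁻¹ * ‖𝓕 h m‖ ≤ (Real.sqrt N)⁻¹ * (M.card / N * ∑ ω, ‖𝓕 h ω‖) :=
        mul_le_mul_of_nonneg_left (ZMod.norm_dft_le_of_support_subset hsupp m) hs
    _ = _ := by ring

lemma l1_sub_two_mul_le_l1_compl_sub_l1 {N : ℕ} [NeZero N] {u : ZMod N → ℂ} {c : ℝ}
    (S : Finset (ZMod N)) (hu : ∀ ω ∈ S, ‖u ω‖ ≤ c) :
    l1 univ u - 2 * (S.card * c) ≤ l1 Sᶜ u - l1 S u := by
  have hsplit : l1 univ u = l1 S u + l1 Sᶜ u := (sum_add_sum_compl S _).symm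
  have hS : l1 S u ≤ S.card * c := by
    simpa only [l1, sum_const, nsmul_eq_mul] using sum_le_sum hu
  linarith

theorem stmt19 {N : ℕ} [NeZero N] (h : ZMod N → ℂ) (M S : Finset (ZMod N))
    (hsupp : ∀ x, h x ≠ 0 → x ∈ M) :
    (1 - 2 * ((M.card : ℝ) * S.card / N)) * l1 univ (dft h) ≤
      l1 Sᶜ (dft h) - l1 S (dft h) := by
  have key :=
    l1_sub_two_mul_le_l1_compl_sub_l1 S fun ω _ => norm_dft_le_card_div_mul_l1 hsupp ω
  calc (1 - 2 * ((M.card : ℝ) * S.card / N)) * l1 univ (dft h)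
      = l1 univ (dft h) - 2 * (S.card * (M.card / N * l1 univ (dft h))) := by ring
    _ ≤ _ := key
end
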